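/- arXiv:1705.02609 — 5 statements merged into one kernel-verified Lean document; each statement's English description precedes it below -/
import Mathlib

section
/- For every deterministic finite word automaton B = (P, p0, σ, F') over a finite alphabet Σ, there exists a forgetful distributed automaton A over Σ-labeled 1-relational digraphs such that for every Σ-labeled directed path (dipath) with last node v, A accepts the pointed dipath at v if and only if B accepts the word spelled by the labels of the dipath read from the start node to v. -/
set_option linter.unnecessarySimpa false


/-- A finite nonempty Σ-labeled 1-relational digraph. -/
structure DGraph (A : Type) where
  V : Type
  [finV : Finite V]
  [neV : Nonempty V]
  E : V → V → Prop
  lab : V → A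

attribute [instance] DGraph.finV DGraph.neV

/-- A forgetful distributed automaton over Σ-labeled 1-relational digraphs:
the transition depends only on the node's label and the set of states of its
incoming neighbors (not on the node's own state). -/
structure FDA (A : Type) where
  Q : Type
  [finQ : Finite Q]
  q0 : Q
  δ : A → Set Q → Q
  F : Set Q

attribute [instance] FDA.finQ

/-- The run of a forgetful distributed automaton on a digraph. -/
def FDA.run {A : Type} (M : FDA A) (G : DGraph A) : ℕ → G.V → M.Q
  | 0, _ => M.q0
  | t+1, v => M.δ (G.lab v) {q | ∃ u, G.E u v ∧ M.run G t u = q}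

/-- Acceptance of a pointed digraph: the distinguished node visits an accepting
state at some time. -/
def FDA.Accepts {A : Type} (M : FDA A) (G : DGraph A) (v : G.V) : Prop :=
  ∃ t, M.run G t v ∈ M.F

/-- The dipath whose node labels spell the nonempty word `w`. -/
def pathGraph {A : Type} (w : List A) (h : w ≠ []) : DGraph A where
  V := Fin w.length
  neV := ⟨⟨0, List.length_pos_iff.mpr h⟩⟩
  E := fun u v => u.val + 1 = v.val
  lab := fun i => w.get i

/-- The last node of the dipath spelling `w`. -/
def lastNode {A : Type} (w : List A) (h : w ≠ []) : (pathGraph w h).V :=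
  ⟨w.length - 1, by have := List.length_pos_iff.mpr h; omega⟩

open Classical in
/-- The forgetful distributed automaton simulating a DFA on dipaths. -/
noncomputable def mkFDA {A σ : Type} [Fintype σ] (B : DFA A σ) : FDA A where
  Q := Option σ
  q0 := none
  δ := fun a N =>
    if h : ∃ s : σ, some s ∈ N then some (B.step h.choose a)
    else if N = ∅ then some (B.step B.start a) else none
  F := Option.some '' B.accept

lemma mkFDA_run {A σ : Type} [Fintype σ] (B : DFA A σ) (w : List A) (hw : w ≠ [])
    (t : ℕ) (i : Fin w.length) :
    (mkFDA B).run (pathGraph w hw) t i =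
      if i.val + 1 ≤ t then some (B.evalFrom B.start (w.take (i.val + 1))) else none := by
  induction t generalizing i with
  | zero => simp only [FDA.run]; rfl
  | succ t ih =>
    obtain ⟨iv, hi⟩ := i
    show (mkFDA B).δ ((pathGraph w hw).lab ⟨iv, hi⟩)
        {q | ∃ u, (pathGraph w hw).E u ⟨iv, hi⟩ ∧ (mkFDA B).run (pathGraph w hw) t u = q} = _
    match iv with
    | 0 =>
      have hset : {q | ∃ u, (pathGraph w hw).E u ⟨0, hi⟩ ∧
          (mkFDA B).run (pathGraph w hw) t u = q} = (∅ : Set (Option σ)) := by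
        ext q
        simp only [Set.mem_setOf_eq, Set.mem_empty_iff_false, iff_false, not_exists]
        refine ⟨?_, fun h => absurd h (Set.notMem_empty q)⟩
        rintro ⟨u, hE, _⟩
        exact absurd hE (by simp [pathGraph])
      rw [hset]
      have h1 : ¬ ∃ s : σ, some s ∈ (∅ : Set (Option σ)) := by simp
      simp only [mkFDA, dif_neg h1, if_pos rfl]
      have : (0 : ℕ) + 1 ≤ t + 1 := by omega
      rw [if_pos this]
      have htake : w.take (0 + 1) = [w.get ⟨0, hi⟩] := by
        rw [List.take_succ]
        simp [List.getElem?_eq_getElem hi]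
      rw [htake]
      simp [DFA.evalFrom, pathGraph]
    | j + 1 =>
      have hj : j < w.length := by omega
      have hset : {q | ∃ u, (pathGraph w hw).E u ⟨j + 1, hi⟩ ∧
          (mkFDA B).run (pathGraph w hw) t u = q} =
          {(mkFDA B).run (pathGraph w hw) t ⟨j, hj⟩} := by
        ext q
        simp only [Set.mem_setOf_eq, Set.mem_singleton_iff]
        constructor
        · rintro ⟨u, hE, rfl⟩
          have : u = ⟨j, hj⟩ := by
            apply Fin.ext
            show u.val = j
            have : u.val + 1 = j + 1 := hE
            omega
          rw [this]
        · intro hq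
          exact ⟨⟨j, hj⟩, rfl, hq.symm⟩
      rw [hset, ih ⟨j, hj⟩]
      by_cases hc : j + 1 ≤ t
      · rw [if_pos hc]
        set s := B.evalFrom B.start (w.take (j + 1)) with hs
        have h1 : ∃ s' : σ, some s' ∈ ({some s} : Set (Option σ)) := ⟨s, rfl⟩
        have hch : h1.choose = s := by
          have := h1.choose_spec
          simpa using this
        simp only [mkFDA]
        erw [dif_pos h1, hch]
        have : j + 1 + 1 ≤ t + 1 := by omega
        rw [if_pos this]
        have htake : w.take (j + 1 + 1) = w.take (j + 1) ++ [w.get ⟨j + 1, hi⟩] := by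
          rw [List.take_succ]
          simp [List.getElem?_eq_getElem hi]
        rw [htake, DFA.evalFrom_append_singleton]
        simp [pathGraph, hs]
      · rw [if_neg hc]
        have h1 : ¬ ∃ s' : σ, some s' ∈ ({(none : Option σ)} : Set (Option σ)) := by simp
        have h2 : ({(none : Option σ)} : Set (Option σ)) ≠ ∅ := by
          simp [Set.singleton_ne_empty]
        simp only [mkFDA]
        erw [dif_neg h1, if_neg h2]
        rw [if_neg (by omega)]

/-- every deterministic finite word automaton can be simulated by a
forgetful distributed automaton on dipaths, pointed at the last node. -/
theorem dfa_to_forgetful (A σ : Type) [Fintype σ] (B : DFA A σ) :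
    ∃ M : FDA A, ∀ (w : List A) (h : w ≠ []),
      M.Accepts (pathGraph w h) (lastNode w h) ↔ w ∈ B.accepts := by
  refine ⟨mkFDA B, fun w hw => ?_⟩
  have hlen : 0 < w.length := List.length_pos_iff.mpr hw
  have hval : (lastNode w hw).val = w.length - 1 := rfl
  have hsum : (lastNode w hw).val + 1 = w.length := by rw [hval]; omega
  constructor
  · rintro ⟨t, ht⟩
    rw [mkFDA_run B w hw t (lastNode w hw)] at ht
    by_cases hc : (lastNode w hw).val + 1 ≤ t
    · rw [if_pos hc] at ht
      obtain ⟨s, hs, hse⟩ := ht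
      rw [B.mem_accepts]
      have : s = B.evalFrom B.start (w.take ((lastNode w hw).val + 1)) :=
        Option.some_injective _ hse
      rw [this] at hs
      rw [hsum, List.take_length] at hs
      simpa [DFA.eval] using hs
    · rw [if_neg hc] at ht
      exact absurd ht (by simp only [mkFDA]; rintro ⟨_, _, h⟩; cases h)
  · intro hacc
    refine ⟨w.length, ?_⟩
    rw [mkFDA_run B w hw w.length (lastNode w hw), if_pos (by omega)]
    rw [hsum, List.take_length]
    exact ⟨B.evalFrom B.start w, (by simpa [DFA.eval] using B.mem_accepts.mp hacc), rfl⟩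
end

section
/- For every forgetful distributed automaton A = (Q, q0, (δ_a)_{a∈Σ}, F) over Σ-labeled 1-relational digraphs, the deterministic finite word automaton B with state set P(Q), initial state ∅, accepting states {S ⊆ Q : S ∩ F ≠ ∅}, and transition σ(S, a) = {q0} ∪ {δ_a(∅)} if S = ∅, and {q0} ∪ {δ_a({q}) : q ∈ S} otherwise, satisfies: for every nonempty word w over Σ, B accepts w if and only if A accepts the pointed dipath whose label sequence is w, pointed at its last node. -/
open scoped Classical

/-- The powerset word automaton associated with a forgetful distributed
automaton: states are sets of states of `M`, the initial state is `∅`,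
a set is accepting iff it meets `M.F`, and
`σ(S, a) = {q0} ∪ {δ_a(∅)}` if `S = ∅`, and `{q0} ∪ {δ_a({q}) : q ∈ S}`
otherwise. -/
noncomputable def powersetDFA {A : Type} (M : FDA A) : DFA A (Set M.Q) where
  step := fun S a =>
    if S = (∅ : Set M.Q) then insert M.q0 {M.δ a ∅}
    else insert M.q0 ((fun q => M.δ a {q}) '' S)
  start := ∅
  accept := {S | (S ∩ M.F).Nonempty}


lemma powersetDFA_key {A : Type} (M : FDA A) (w : List A) (h : w ≠ []) :
    ∀ i : ℕ, ∀ hi : i < w.length,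
      (powersetDFA M).eval (w.take (i+1)) =
        {q | ∃ t, M.run (pathGraph w h) t ⟨i, hi⟩ = q} := by
  intro i
  induction i with
  | zero =>
    intro hi
    have htake : w.take 1 = [w.get ⟨0, hi⟩] := by
      rw [List.take_succ, List.take_zero, List.getElem?_eq_getElem hi]
      rfl
    rw [htake]
    have heval : (powersetDFA M).eval [w.get ⟨0, hi⟩]
        = (powersetDFA M).step (powersetDFA M).start (w.get ⟨0, hi⟩) := rfl
    rw [heval]
    have hstep : (powersetDFA M).step (powersetDFA M).start (w.get ⟨0, hi⟩)
        = insert M.q0 {M.δ (w.get ⟨0, hi⟩) ∅} := by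
      simp [powersetDFA]
    rw [hstep]
    have hpred : ∀ t : ℕ, {q | ∃ u, (pathGraph w h).E u ⟨0, hi⟩ ∧
        M.run (pathGraph w h) t u = q} = (∅ : Set M.Q) := by
      intro t
      ext q
      simp only [Set.mem_setOf_eq, Set.mem_empty_iff_false, iff_false]
      rintro ⟨u, hu, -⟩
      simp only [pathGraph] at hu
      omega
    ext q
    constructor
    · rintro (rfl | rfl)
      · exact ⟨0, rfl⟩
      · refine ⟨1, ?_⟩
        show M.δ ((pathGraph w h).lab ⟨0, hi⟩) _ = _
        rw [hpred 0]
        rfl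
    · rintro ⟨t, rfl⟩
      cases t with
      | zero => exact Or.inl rfl
      | succ t =>
        right
        show M.δ ((pathGraph w h).lab ⟨0, hi⟩) _ ∈ _
        rw [hpred t]
        rfl
  | succ i ih =>
    intro hi
    have hi' : i < w.length := by omega
    have hS := ih hi'
    have hq0 : M.q0 ∈ (powersetDFA M).eval (w.take (i+1)) := by
      rw [hS]; exact ⟨0, rfl⟩
    have hSne : (powersetDFA M).eval (w.take (i+1)) ≠ (∅ : Set M.Q) := by
      intro hc; rw [hc] at hq0; exact hq0
    have htake : w.take (i+2) = w.take (i+1) ++ [w.get ⟨i+1, hi⟩] := by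
      rw [List.take_succ, List.getElem?_eq_getElem hi]
      rfl
    rw [htake]
    have heval : (powersetDFA M).eval (w.take (i+1) ++ [w.get ⟨i+1, hi⟩])
        = (powersetDFA M).step ((powersetDFA M).eval (w.take (i+1))) (w.get ⟨i+1, hi⟩) := by
      rw [DFA.eval_append_singleton]
    rw [heval]
    have hstep : (powersetDFA M).step ((powersetDFA M).eval (w.take (i+1))) (w.get ⟨i+1, hi⟩)
        = insert M.q0 ((fun q => M.δ (w.get ⟨i+1, hi⟩) {q}) '' ((powersetDFA M).eval (w.take (i+1)))) := by
      have hgen : ∀ S : Set M.Q, S ≠ ∅ → ∀ a : A,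
          (powersetDFA M).step S a = insert M.q0 ((fun q => M.δ a {q}) '' S) := by
        intro S hSe a
        simp [powersetDFA, hSe]
      exact hgen _ hSne _
    rw [hstep, hS]
    have hpred : ∀ t : ℕ, {q | ∃ u, (pathGraph w h).E u ⟨i+1, hi⟩ ∧
        M.run (pathGraph w h) t u = q} = {M.run (pathGraph w h) t ⟨i, hi'⟩} := by
      intro t
      ext q
      simp only [Set.mem_setOf_eq, Set.mem_singleton_iff]
      constructor
      · rintro ⟨u, hu, rfl⟩
        have : u = ⟨i, hi'⟩ := by
          have hu' : u.val + 1 = i + 1 := hu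
          exact Fin.ext (show u.val = i by omega)
        rw [this]
      · rintro rfl
        exact ⟨⟨i, hi'⟩, by simp [pathGraph], rfl⟩
    have hrun : ∀ t : ℕ, M.run (pathGraph w h) (t+1) ⟨i+1, hi⟩
        = M.δ (w.get ⟨i+1, hi⟩) {M.run (pathGraph w h) t ⟨i, hi'⟩} := by
      intro t
      show M.δ ((pathGraph w h).lab ⟨i+1, hi⟩) _ = _
      rw [hpred t]
      rfl
    ext q
    constructor
    · rintro (rfl | ⟨p, ⟨t, rfl⟩, rfl⟩)
      · exact ⟨0, rfl⟩
      · exact ⟨t+1, hrun t⟩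
    · rintro ⟨t, rfl⟩
      cases t with
      | zero => exact Or.inl rfl
      | succ t =>
        right
        rw [hrun t]
        exact ⟨_, ⟨t, rfl⟩, rfl⟩

/-- the powerset word automaton accepts a nonempty word `w` iff
the forgetful distributed automaton accepts the dipath spelling `w`, pointed at
its last node. -/
theorem forgetful_to_dfa (A : Type) (M : FDA A) :
    ∀ (w : List A) (h : w ≠ []),
      w ∈ (powersetDFA M).accepts ↔ M.Accepts (pathGraph w h) (lastNode w h) := by
  intro w h
  have hi : w.length - 1 < w.length := by
    have := List.length_pos_iff.mpr h; omega
  have hkey := powersetDFA_key M w h (w.length - 1) hi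
  have htake : w.take (w.length - 1 + 1) = w := by
    have := List.length_pos_iff.mpr h
    rw [Nat.sub_add_cancel this, List.take_length]
  rw [htake] at hkey
  rw [DFA.mem_accepts, hkey]
  show ((_ : Set M.Q) ∩ M.F).Nonempty ↔ _
  constructor
  · rintro ⟨q, ⟨t, rfl⟩, hqF⟩
    exact ⟨t, hqF⟩
  · rintro ⟨t, ht⟩
    exact ⟨_, ⟨t, rfl⟩, ht⟩
end

section
/- Let A = (Q, q0, (δ_a)_{a∈Σ}, F) be a forgetful distributed automaton over Σ-labeled r-relational digraphs, and for each t ∈ ℕ let Σ_t ⊆ Q be the set of states q such that there exists a pointed digraph (G, v) with ρ_t(v) = q in the run of A on G. Then Σ_0 = {q0} and Σ_{t+1} = Γ(Σ_t) for all t, where Γ(S) = { δ_a(T⃗) : a ∈ Σ, T⃗ ∈ (P(S))^r }. -/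
/-- A finite nonempty Σ-labeled r-relational digraph. -/
structure RGraph (A : Type) (r : ℕ) where
  V : Type
  [finV : Finite V]
  [neV : Nonempty V]
  E : Fin r → V → V → Prop
  lab : V → A

attribute [instance] RGraph.finV RGraph.neV

/-- A forgetful distributed automaton over Σ-labeled r-relational digraphs:
transitions `δ_a : (P(Q))^r → Q` depend only on the label and the sets of
states of the incoming k-neighbors. -/
structure RFDA (A : Type) (r : ℕ) where
  Q : Type
  [finQ : Finite Q]
  q0 : Q
  δ : A → (Fin r → Set Q) → Q
  F : Set Q

attribute [instance] RFDA.finQ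

/-- The run: `ρ_0(v) = q0` and
`ρ_{t+1}(v) = δ_{λ(v)}({ρ_t(u) : (u,v) ∈ E_1}, …, {ρ_t(u) : (u,v) ∈ E_r})`. -/
def RFDA.run {A : Type} {r : ℕ} (M : RFDA A r) (G : RGraph A r) :
    ℕ → G.V → M.Q
  | 0, _ => M.q0
  | t+1, v => M.δ (G.lab v) (fun k => {q | ∃ u, G.E k u v ∧ M.run G t u = q})

/-- Acceptance of a pointed digraph. -/
def RFDA.Accepts {A : Type} {r : ℕ} (M : RFDA A r) (G : RGraph A r)
    (v : G.V) : Prop :=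
  ∃ t, M.run G t v ∈ M.F

/-- `Σ_t`: the set of states realizable at some node of some pointed digraph at
time `t`. -/
def realizable {A : Type} {r : ℕ} (M : RFDA A r) (t : ℕ) : Set M.Q :=
  {q | ∃ (G : RGraph A r) (v : G.V), M.run G t v = q}

/-- `Γ(S) = { δ_a(T⃗) : a ∈ Σ, T⃗ ∈ (P(S))^r }`. -/
def gamma {A : Type} {r : ℕ} (M : RFDA A r) (S : Set M.Q) : Set M.Q :=
  {q | ∃ (a : A) (T : Fin r → Set M.Q), (∀ k, T k ⊆ S) ∧ M.δ a T = q}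

instance {X : Type} [Finite X] : Finite (Option X) :=
  Finite.of_equiv _ (Equiv.optionEquivSumPUnit.{0,0} X).symm

section Construction

variable {A : Type} {r : ℕ} (M : RFDA A r) (a : A) (T : Fin r → Set M.Q)
  (W : ∀ k, T k → RGraph A r) (vd : ∀ k (q : T k), (W k q).V)

/-- The big graph: a fresh node `none` whose incoming `k`-neighbors are the
distinguished nodes of copies of witness graphs for each `q ∈ T k`. -/
def bigG : RGraph A r where
  V := Option ((k : Fin r) × (q : T k) × (W k q).V)
  E := fun k' x y =>
    (∃ (k : Fin r) (q : T k) (u1 u2 : (W k q).V), x = some ⟨k, q, u1⟩ ∧ y = some ⟨k, q, u2⟩ ∧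
      (W k q).E k' u1 u2)
    ∨ (y = none ∧ ∃ q : T k', x = some ⟨k', q, vd k' q⟩)
  lab := fun x => match x with
    | none => a
    | some ⟨k, q, u⟩ => (W k q).lab u

lemma bigG_run_copy : ∀ (s : ℕ) (k : Fin r) (q : T k) (u : (W k q).V),
    M.run (bigG M a T W vd) s (some ⟨k, q, u⟩) = M.run (W k q) s u := by
  intro s
  induction s with
  | zero => intro k q u; rfl
  | succ s ih =>
    intro k q u
    show M.δ _ _ = M.δ _ _
    congr 1
    funext k'
    ext p
    simp only [Set.mem_setOf_eq]
    constructor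
    · rintro ⟨x, hE, rfl⟩
      rcases hE with ⟨k0, q0, u1, u2, rfl, h2, hE⟩ | ⟨h, _⟩
      · injection h2 with h2
        obtain ⟨rfl, h2⟩ := Sigma.mk.inj_iff.mp h2
        rw [heq_eq_eq] at h2
        obtain ⟨rfl, h2⟩ := Sigma.mk.inj_iff.mp h2
        rw [heq_eq_eq] at h2
        subst h2
        exact ⟨u1, hE, (ih _ _ u1).symm⟩
      · simp at h
    · rintro ⟨u', hE, rfl⟩
      exact ⟨some ⟨k, q, u'⟩, Or.inl ⟨k, q, u', u, rfl, rfl, hE⟩, ih k q u'⟩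

lemma bigG_run_fresh (t : ℕ) (hv : ∀ k (q : T k), M.run (W k q) t (vd k q) = q) :
    M.run (bigG M a T W vd) (t + 1) none = M.δ a T := by
  show M.δ _ _ = M.δ a T
  congr 1
  funext k
  ext p
  simp only [Set.mem_setOf_eq]
  constructor
  · rintro ⟨x, hE, rfl⟩
    rcases hE with ⟨k0, q0, u1, u2, rfl, h2, hE⟩ | ⟨-, q, rfl⟩
    · simp at h2
    · rw [bigG_run_copy, hv]
      exact q.2
  · intro hp
    refine ⟨some ⟨k, ⟨p, hp⟩, vd k ⟨p, hp⟩⟩, Or.inr ⟨rfl, ⟨p, hp⟩, rfl⟩, ?_⟩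
    rw [bigG_run_copy, hv]

end Construction

/-- `Σ_0 = {q0}` and `Σ_{t+1} = Γ(Σ_t)` for all `t`. -/
theorem realizable_recurrence (A : Type) [Nonempty A] (r : ℕ)
    (M : RFDA A r) :
    realizable M 0 = {M.q0} ∧
      ∀ t : ℕ, realizable M (t + 1) = gamma M (realizable M t) := by
  constructor
  · ext q
    simp only [realizable, Set.mem_setOf_eq, Set.mem_singleton_iff]
    constructor
    · rintro ⟨G, v, rfl⟩; rfl
    · rintro rfl
      obtain ⟨a⟩ := ‹Nonempty A›
      exact ⟨⟨Unit, fun _ _ _ => False, fun _ => a⟩, (), rfl⟩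
  · intro t
    ext q
    simp only [realizable, gamma, Set.mem_setOf_eq]
    constructor
    · rintro ⟨G, v, rfl⟩
      refine ⟨G.lab v, _, ?_, rfl⟩
      rintro k q' ⟨u, -, hu⟩
      exact ⟨G, u, hu⟩
    · rintro ⟨a, T, hT, rfl⟩
      choose W vd hv using fun (k : Fin r) (q : T k) => hT k q.2
      exact ⟨bigG M a T W vd, none, bigG_run_fresh M a T W vd t hv⟩
end

section
/- The emptiness problem for forgetful distributed automata is decidable: there is an algorithm that, given a forgetful distributed automaton A over Σ-labeled r-relational digraphs, decides whether there exists a pointed digraph accepted by A. Concretely, the language of A is nonempty if and only if the iteration S ← Γ(S) starting from S = {q0}, run for at most 2^|Q| steps, reaches a set S with S ∩ F ≠ ∅, where Γ(S) = { δ_a(T⃗) : a ∈ Σ, T⃗ ∈ (P(S))^r }. -/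
section Aux

open Classical

/-- The one-vertex graph with no edges. -/
noncomputable def oneGraph (A : Type) [Nonempty A] (r : ℕ) : RGraph A r where
  V := Unit
  E _ _ _ := False
  lab _ := Classical.arbitrary A

lemma realizable_zero {A : Type} [Nonempty A] {r : ℕ} (M : RFDA A r) :
    realizable M 0 = {M.q0} := by
  ext q
  constructor
  · rintro ⟨G, v, h⟩
    simpa [RFDA.run] using h.symm
  · rintro rfl
    exact ⟨oneGraph A r, (), rfl⟩

variable {A : Type} {r : ℕ} (M : RFDA A r) (a : A) (T : Fin r → Set M.Q)
  (Gw : (Σ k : Fin r, ↥(T k)) → RGraph A r)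
  (vw : ∀ i, (Gw i).V)

/-- Disjoint union of the witness graphs with a fresh root vertex labeled `a`,
whose `k`-in-neighbors are the chosen witness vertices of components indexed by `k`. -/
def bigGraph : RGraph A r where
  V := Unit ⊕ Σ i : (Σ k : Fin r, ↥(T k)), (Gw i).V
  E k x y :=
    match x, y with
    | Sum.inr p, Sum.inr p' => ∃ h : p.1 = p'.1, (Gw p'.1).E k (h ▸ p.2) p'.2
    | Sum.inr p, Sum.inl _ => p.1.1 = k ∧ p.2 = vw p.1
    | _, _ => False
  lab x :=
    match x with
    | Sum.inl _ => a
    | Sum.inr p => (Gw p.1).lab p.2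

lemma run_component : ∀ (s : ℕ) (p : Σ i : (Σ k : Fin r, ↥(T k)), (Gw i).V),
    M.run (bigGraph M a T Gw vw) s (Sum.inr p) = M.run (Gw p.1) s p.2
  | 0, _ => rfl
  | s + 1, ⟨i, u⟩ => by
    show M.δ _ _ = M.δ _ _
    congr 1
    funext k
    ext q
    constructor
    · rintro ⟨x, hx, hrun⟩
      rcases x with _ | ⟨j, u'⟩
      · exact absurd hx (by simp [bigGraph])
      · obtain ⟨h, he⟩ := hx
        cases h
        exact ⟨u', he, by rw [← hrun, run_component s ⟨i, u'⟩]⟩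
    · rintro ⟨u', he, hrun⟩
      exact ⟨Sum.inr ⟨i, u'⟩, ⟨rfl, he⟩,
        by rw [run_component s ⟨i, u'⟩]; exact hrun⟩

lemma run_root (t : ℕ) (hw : ∀ i, M.run (Gw i) t (vw i) = (i.2 : M.Q)) :
    M.run (bigGraph M a T Gw vw) (t + 1) (Sum.inl ()) = M.δ a T := by
  show M.δ _ _ = M.δ a T
  congr 1
  funext k
  ext q
  constructor
  · rintro ⟨x, hx, hrun⟩
    rcases x with _ | ⟨i, u⟩
    · exact absurd hx (by simp [bigGraph])
    · obtain ⟨hk, hu⟩ := hx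
      have hk' : i.1 = k := hk
      have hu' : u = vw i := hu
      subst hu'
      have hrun' : M.run (Gw i) t (vw i) = q := (run_component M a T Gw vw t ⟨i, vw i⟩).symm.trans hrun
      rw [hw] at hrun'
      rw [← hrun', ← hk']
      exact i.2.2
  · intro hq
    refine ⟨Sum.inr ⟨⟨k, ⟨q, hq⟩⟩, vw ⟨k, ⟨q, hq⟩⟩⟩, ⟨rfl, rfl⟩, ?_⟩
    rw [run_component, hw]

lemma realizable_succ [Nonempty A] (t : ℕ) :
    realizable M (t + 1) = gamma M (realizable M t) := by
  ext q
  constructor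
  · rintro ⟨G, v, h⟩
    exact ⟨G.lab v, fun k => {q | ∃ u, G.E k u v ∧ M.run G t u = q},
      fun k q' ⟨u, _, hu⟩ => ⟨G, u, hu⟩, h⟩
  · rintro ⟨a, T, hT, rfl⟩
    have hch : ∀ i : Σ k : Fin r, ↥(T k),
        ∃ (G : RGraph A r) (v : G.V), M.run G t v = (i.2 : M.Q) :=
      fun i => hT i.1 i.2.2
    choose Gw vw hw using hch
    exact ⟨bigGraph M a T Gw vw, Sum.inl (), run_root M a T Gw vw t hw⟩

lemma realizable_eq [Nonempty A] (t : ℕ) :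
    realizable M t = (gamma M)^[t] {M.q0} := by
  induction t with
  | zero => exact realizable_zero M
  | succ t ih => rw [Function.iterate_succ_apply', ← ih, realizable_succ]

lemma bound_aux {β : Type} [Finite β] (f : β → β) (S0 : β) (P : β → Prop)
    (N : ℕ) (hN : Nat.card β ≤ N) :
    ∀ t, P (f^[t] S0) → ∃ t' ≤ N, P (f^[t'] S0) := by
  intro t
  induction t using Nat.strong_induction_on with
  | _ t ih =>
    intro hP
    rcases le_or_gt t N with h | h
    · exact ⟨t, h, hP⟩
    · have := Fintype.ofFinite β
      obtain ⟨i, j, hne, heq⟩ :=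
        Fintype.exists_ne_map_eq_of_card_lt
          (fun n : Fin (N + 1) => f^[(n : ℕ)] S0)
          (by simpa [Nat.card_eq_fintype_card] using Nat.lt_succ_of_le hN)
      wlog hij : (i : ℕ) < (j : ℕ) generalizing i j
      · exact this j i hne.symm heq.symm
          (lt_of_le_of_ne (le_of_not_gt hij) (by simpa [Fin.ext_iff] using hne.symm))
      have hjt : (j : ℕ) ≤ t := le_of_lt (lt_of_le_of_lt (Nat.lt_succ_iff.mp j.2) h)
      have key : f^[t - (j : ℕ) + (i : ℕ)] S0 = f^[t] S0 := by
        conv_rhs => rw [show t = t - (j : ℕ) + (j : ℕ) from (Nat.sub_add_cancel hjt).symm]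
        rw [Function.iterate_add_apply, Function.iterate_add_apply, heq]
      exact ih (t - (j : ℕ) + (i : ℕ))
        (by omega) (key ▸ hP)

end Aux

/-- decidability of emptiness for forgetful distributed automata,
concretely: the language of `M` is nonempty iff iterating
`Γ(S) = { δ_a(T⃗) : a ∈ Σ, T⃗ ∈ (P(S))^r }` from `{q0}` meets `F` within
`2^|Q|` steps. -/
theorem forgetful_emptiness_decidable (A : Type) [Nonempty A] (r : ℕ)
    (M : RFDA A r) :
    (∃ (G : RGraph A r) (v : G.V), M.Accepts G v) ↔
      ∃ t : ℕ, t ≤ 2 ^ Nat.card M.Q ∧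
        (((gamma M)^[t] {M.q0}) ∩ M.F).Nonempty := by
  have hcard : Nat.card (Set M.Q) = 2 ^ Nat.card M.Q := by
    have := Fintype.ofFinite M.Q
    simp [Nat.card_eq_fintype_card]
  constructor
  · rintro ⟨G, v, t, ht⟩
    have hq : M.run G t v ∈ realizable M t := ⟨G, v, rfl⟩
    rw [realizable_eq] at hq
    exact bound_aux (gamma M) {M.q0} (fun S => (S ∩ M.F).Nonempty)
      (2 ^ Nat.card M.Q) (le_of_eq hcard) t ⟨M.run G t v, hq, ht⟩
  · rintro ⟨t, -, q, hq, hqF⟩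
    rw [← realizable_eq] at hq
    obtain ⟨G, v, hGv⟩ := hq
    exact ⟨G, v, t, hGv ▸ hqF⟩
end

section
/- In the space-time exchange simulation, correctness of the configuration traversal holds: let M be a deterministic Turing machine with configurations C_0, C_1, C_2, ... (as infinite sequences over Γ ∪ (S × Γ) with exactly one head symbol each), and let A_M be the simulating distributed automaton run on a dipath v_0 → v_1 → ... → v_n. Then for every t ≤ n and every time step, the third state-component of node v_t at A_M-time t' equals: the waiting symbol w if t' ≤ 2t, and the (t' − 2t)-th cell of configuration C_t if t' > 2t (indexing cells from 1). In particular, v_t visits an accepting state of A_M if and only if M is in its halting state at machine-time t. -/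
/-- A deterministic single-tape Turing machine with a one-way infinite,
initially blank tape: states `Fin (n+1)` with initial state `s0` and halting
state `h`, tape alphabet `Fin (m+1)` with blank `b`, and transition
`τ : S × Γ → S × Γ × {L,R}` (the direction `true` means Right).  The machine
stops (its configuration is frozen) once it reaches `h`. -/
structure TM where
  n : ℕ
  m : ℕ
  s0 : Fin (n + 1)
  h : Fin (n + 1)
  b : Fin (m + 1)
  τ : Fin (n + 1) → Fin (m + 1) → Fin (n + 1) × Fin (m + 1) × Bool

/-- Configurations: current state, head position, tape contents. -/
def TM.Config (M : TM) : Type :=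
  Fin (M.n + 1) × ℕ × (ℕ → Fin (M.m + 1))

/-- The initial configuration: state `s0`, head on cell `0`, blank tape. -/
def TM.init (M : TM) : M.Config :=
  (M.s0, 0, fun _ => M.b)

/-- One computation step (frozen once the halting state is reached). -/
def TM.step (M : TM) (c : M.Config) : M.Config :=
  if c.1 = M.h then c
  else
    let r := M.τ c.1 (c.2.2 c.2.1)
    (r.1, (if r.2.2 then c.2.1 + 1 else c.2.1 - 1),
      Function.update c.2.2 c.2.1 r.2.1)

/-- `M` is in its halting state at time `t`. -/
def TM.HaltsAt (M : TM) (t : ℕ) : Prop :=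
  ((M.step)^[t] M.init).1 = M.h

/-- `M` eventually reaches its halting state. -/
def TM.Halts (M : TM) : Prop :=
  ∃ t, M.HaltsAt t

/-- A cell content of a configuration of `M`: either a plain tape symbol, or a
symbol together with the head (machine state). -/
def TM.Cell (M : TM) : Type :=
  Fin (M.m + 1) ⊕ (Fin (M.n + 1) × Fin (M.m + 1))

/-- The local rule: the new content of a cell, given the old contents of the
cell to its left, the cell itself, and the cell to its right.  The
configuration is frozen once the halting state is reached. -/
def TM.nextCell (M : TM) (l c r : M.Cell) : M.Cell :=
  match c with
  | Sum.inr (s, γ) =>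
      if s = M.h then Sum.inr (s, γ) else Sum.inl (M.τ s γ).2.1
  | Sum.inl γc =>
    match l with
    | Sum.inr (s, γ) =>
        if s = M.h then Sum.inl γc
        else if (M.τ s γ).2.2 then Sum.inr ((M.τ s γ).1, γc) else Sum.inl γc
    | Sum.inl _ =>
      match r with
      | Sum.inr (s, γ) =>
          if s = M.h then Sum.inl γc
          else if (M.τ s γ).2.2 then Sum.inl γc
          else Sum.inr ((M.τ s γ).1, γc)
      | Sum.inl _ => Sum.inl γc

/-- `Conf M t c` is the content of cell `c` (0-indexed) of the configuration
`C_t` of `M` at machine-time `t`; `C_0 = (s0,b) b b b ⋯` and cell `c` of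
`C_{t+1}` depends only on cells `c−1`, `c`, `c+1` of `C_t` (with a virtual
blank cell to the left of cell `0`). -/
def TM.Conf (M : TM) : ℕ → ℕ → M.Cell
  | 0, c => if c = 0 then Sum.inr (M.s0, M.b) else Sum.inl M.b
  | t+1, c =>
      M.nextCell (if c = 0 then Sum.inl M.b else M.Conf t (c - 1))
        (M.Conf t c) (M.Conf t (c + 1))

/-- The state set `({w} ∪ (S × Γ) ∪ Γ)^3` of the simulating automaton `A_M`:
three components, each either the waiting symbol `w` (here `none`) or a cell
content. -/
def TM.St (M : TM) : Type :=
  Option M.Cell × Option M.Cell × Option M.Cell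

/-- The run of a distributed automaton with state set `Q`, initial state `q0`
and transition `δ` on the (unlabeled) dipath `v_0 → v_1 → v_2 → ⋯`:
`pathRunS q0 δ t' v` is the state of node `v_v` at time `t'`. -/
def pathRunS {Q : Type} (q0 : Q) (δ : Q → Set Q → Q) : ℕ → ℕ → Q
  | 0, _ => q0
  | t+1, v => δ (pathRunS q0 δ t v)
      (if v = 0 then ∅ else {pathRunS q0 δ t (v - 1)})

open Classical

/-- Transition used by node `v_0` (no incoming neighbor). -/
def TM.d0 (M : TM) (q : M.St) : M.St :=
  (q.2.1, q.2.2,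
    some (match q.2.2 with
      | none => Sum.inr (M.s0, M.b)
      | some _ => Sum.inl M.b))

/-- Transition used by node `v_t`, `t ≥ 1`, with predecessor state `p`. -/
def TM.d1 (M : TM) (q p : M.St) : M.St :=
  match p.2.1 with
  | none => (none, none, none)
  | some mid =>
      (q.2.1, q.2.2,
        some (M.nextCell (p.1.getD (Sum.inl M.b)) mid
          (p.2.2.getD (Sum.inl M.b))))

/-- The transition function of the simulating automaton `A_M`. -/
noncomputable def TM.delta (M : TM) : M.St → Set M.St → M.St :=
  fun q N => if h : N.Nonempty then M.d1 q h.choose else M.d0 q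

lemma TM.delta_empty (M : TM) (q : M.St) : M.delta q ∅ = M.d0 q := by
  unfold TM.delta
  rw [dif_neg Set.not_nonempty_empty]

lemma TM.delta_singleton (M : TM) (q p : M.St) :
    M.delta q {p} = M.d1 q p := by
  unfold TM.delta
  rw [dif_pos (Set.singleton_nonempty p)]
  have h := (Set.singleton_nonempty p).choose_spec
  rw [Set.mem_singleton_iff] at h
  rw [h]

/-- Component `k` (counting back from the frontier) of the intended state of
node `v` at time `t'`. -/
def TM.g (M : TM) (v t' k : ℕ) : Option M.Cell :=
  if 2 * v + k ≤ t' then some (M.Conf v (t' - 2 * v - k)) else none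

/-- The intended state of node `v` at time `t'`. -/
def TM.spec (M : TM) (v t' : ℕ) : M.St :=
  (M.g v t' 3, M.g v t' 2, M.g v t' 1)

lemma TM.g_of_le (M : TM) {v t' k : ℕ} (h : 2 * v + k ≤ t') :
    M.g v t' k = some (M.Conf v (t' - 2 * v - k)) := if_pos h

lemma TM.g_of_lt (M : TM) {v t' k : ℕ} (h : t' < 2 * v + k) :
    M.g v t' k = none := if_neg (by omega)

lemma TM.g_succ (M : TM) (v t' k : ℕ) :
    M.g v (t' + 1) (k + 1) = M.g v t' k := by
  unfold TM.g
  rcases le_or_gt (2 * v + k) t' with h | h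
  · rw [if_pos (by omega), if_pos h,
      show t' + 1 - 2 * v - (k + 1) = t' - 2 * v - k from by omega]
  · rw [if_neg (by omega), if_neg (by omega)]

lemma TM.conf_zero_zero (M : TM) : M.Conf 0 0 = Sum.inr (M.s0, M.b) := by
  simp [TM.Conf]
  rfl

lemma TM.conf_zero_succ (M : TM) (c : ℕ) :
    M.Conf 0 (c + 1) = Sum.inl M.b := by
  simp [TM.Conf]
  rfl

lemma TM.run_eq_spec (M : TM) :
    ∀ t' v, pathRunS (none, none, none) M.delta t' v = M.spec v t' := by
  intro t'
  induction t' with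
  | zero =>
      intro v
      show ((none : Option M.Cell), (none : Option M.Cell),
        (none : Option M.Cell)) = _
      unfold TM.spec
      rw [M.g_of_lt (by omega), M.g_of_lt (by omega), M.g_of_lt (by omega)]
  | succ t' ih =>
      intro v
      show M.delta (pathRunS (none, none, none) M.delta t' v)
        (if v = 0 then ∅ else {pathRunS (none, none, none) M.delta t' (v - 1)})
          = _
      cases v with
      | zero =>
          rw [if_pos rfl]; erw [ih 0]; rw [TM.delta_empty]
          show (M.g 0 t' 2, M.g 0 t' 1,
              some (match M.g 0 t' 1 with
                | none => Sum.inr (M.s0, M.b)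
                | some _ => Sum.inl M.b)) =
            (M.g 0 (t' + 1) 3, M.g 0 (t' + 1) 2, M.g 0 (t' + 1) 1)
          rw [M.g_succ 0 t' 2, M.g_succ 0 t' 1]
          cases t' with
          | zero =>
              rw [M.g_of_lt (show (0:ℕ) < 2 * 0 + 1 from by omega),
                M.g_of_le (show 2 * 0 + 1 ≤ 0 + 1 from by omega),
                show (0 + 1 - 2 * 0 - 1 : ℕ) = 0 from rfl, M.conf_zero_zero]
          | succ u =>
              rw [M.g_of_le (show 2 * 0 + 1 ≤ u + 1 from by omega),
                M.g_of_le (show 2 * 0 + 1 ≤ u + 1 + 1 from by omega),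
                show u + 1 + 1 - 2 * 0 - 1 = (u + 1 - 2 * 0 - 1) + 1 from by
                  omega, M.conf_zero_succ]
      | succ w =>
          rw [if_neg (by omega)]; erw [ih (w + 1), ih (w + 1 - 1)]; erw [
            show w + 1 - 1 = w from rfl, TM.delta_singleton]
          show M.d1 (M.g (w + 1) t' 3, M.g (w + 1) t' 2, M.g (w + 1) t' 1)
              (M.g w t' 3, M.g w t' 2, M.g w t' 1) =
            (M.g (w + 1) (t' + 1) 3, M.g (w + 1) (t' + 1) 2,
              M.g (w + 1) (t' + 1) 1)
          rcases le_or_gt (2 * w + 2) t' with h | h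
          · -- active case
            unfold TM.d1
            rw [M.g_of_le h]
            show (M.g (w + 1) t' 2, M.g (w + 1) t' 1,
                some (M.nextCell ((M.g w t' 3).getD (Sum.inl M.b))
                  (M.Conf w (t' - 2 * w - 2))
                  ((M.g w t' 1).getD (Sum.inl M.b)))) = _
            rw [M.g_succ (w + 1) t' 2, M.g_succ (w + 1) t' 1,
              M.g_of_le (show 2 * (w + 1) + 1 ≤ t' + 1 from by omega)]
            refine congrArg (fun z => (M.g (w + 1) t' 2, M.g (w + 1) t' 1,
              some z)) ?_
            rw [M.g_of_le (show 2 * w + 1 ≤ t' from by omega)]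
            have hc : t' + 1 - 2 * (w + 1) - 1 = t' - 2 * w - 2 := by omega
            rw [hc]
            set c := t' - 2 * w - 2 with hcdef
            show M.nextCell _ _ _ = M.nextCell
              (if c = 0 then Sum.inl M.b else M.Conf w (c - 1))
              (M.Conf w c) (M.Conf w (c + 1))
            rw [show t' - 2 * w - 1 = c + 1 from by omega]
            rcases le_or_gt (2 * w + 3) t' with h3 | h3
            · erw [M.g_of_le h3, if_neg (show ¬ c = 0 from by omega),
                show t' - 2 * w - 3 = c - 1 from by omega]
              rfl
            · erw [M.g_of_lt h3, if_pos (show c = 0 from by omega)]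
              rfl
          · -- waiting case
            unfold TM.d1
            rw [M.g_of_lt (show t' < 2 * w + 2 from h)]
            rw [M.g_of_lt (show t' + 1 < 2 * (w + 1) + 3 from by omega),
              M.g_of_lt (show t' + 1 < 2 * (w + 1) + 2 from by omega),
              M.g_of_lt (show t' + 1 < 2 * (w + 1) + 1 from by omega)]

/-- correctness of the space-time exchange simulation: for every
Turing machine `M` there is a transition function `δ` on the state set
`({w} ∪ (S × Γ) ∪ Γ)^3` (with initial state `(w,w,w)`) such that, in the run on
a dipath, the third state-component of node `v_t` at time `t'` is the waiting
symbol `w` if `t' ≤ 2t` and the `(t'−2t)`-th cell (1-indexed) of the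
configuration `C_t` otherwise; in particular `v_t` visits an accepting state
(one whose third component carries the halting state `h`) iff `M` is in its
halting state at machine-time `t`. -/
theorem space_time_exchange_correct (M : TM) :
    ∃ δ : M.St → Set M.St → M.St,
      (∀ t t' : ℕ,
        (pathRunS (none, none, none) δ t' t).2.2 =
          if t' ≤ 2 * t then none
          else some (M.Conf t (t' - 2 * t - 1))) ∧
      (∀ t : ℕ,
        (∃ (t' : ℕ) (γ : Fin (M.m + 1)),
            (pathRunS (none, none, none) δ t' t).2.2 =
              some (Sum.inr (M.h, γ))) ↔
          ∃ (c : ℕ) (γ : Fin (M.m + 1)),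
            M.Conf t c = Sum.inr (M.h, γ)) := by
  refine ⟨M.delta, ?_, ?_⟩
  · intro t t'
    rw [M.run_eq_spec t' t]
    show M.g t t' 1 = _
    unfold TM.g
    rcases le_or_gt t' (2 * t) with h | h
    · rw [if_neg (by omega), if_pos h]
    · rw [if_pos (by omega), if_neg (by omega)]
  · intro t
    constructor
    · rintro ⟨t', γ, hγ⟩
      rw [M.run_eq_spec t' t] at hγ
      unfold TM.spec TM.g at hγ
      by_cases h : 2 * t + 1 ≤ t'
      · rw [if_pos h] at hγ
        exact ⟨t' - 2 * t - 1, γ, Option.some_injective _ hγ⟩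
      · rw [if_neg h] at hγ
        exact absurd hγ (by simp)
    · rintro ⟨c, γ, hγ⟩
      refine ⟨2 * t + c + 1, γ, ?_⟩
      rw [M.run_eq_spec (2 * t + c + 1) t]
      show M.g t (2 * t + c + 1) 1 = _
      unfold TM.g
      rw [if_pos (by omega)]
      have : 2 * t + c + 1 - 2 * t - 1 = c := by omega
      rw [this, hγ]
      rfl
end
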